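/- arXiv:2309.04927 — 4 statements merged into one kernel-verified Lean document; each statement's English description precedes it below -/
import Mathlib

section
/- Let G be an ample Hausdorff groupoid with compact unit space such that G = Γ ⊔ X, where Γ is a discrete group attached at a single unit e_Γ and X = G^{(0)} \ {e_Γ} consists of units with trivial isotropy. Then F(G) = { {γ} ⊔ X : γ ∈ Γ } and the representation π: ℂF(G) → A(G) is injective. -/
open scoped Classical

/-- A groupoid encoded as a "groupoid with zero": the partially defined composition is
totalised by declaring non-composable products to be `0`.  The actual groupoid elements are
the nonzero elements; the range and source of a nonzero `a` are `a * a⁻¹` and `a⁻¹ * a`. -/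
class GroupoidZ (G : Type*) extends Mul G, Inv G, Zero G where
  zero_mul' : ∀ a : G, 0 * a = 0
  mul_zero' : ∀ a : G, a * 0 = 0
  inv_zero' : (0 : G)⁻¹ = 0
  inv_inv' : ∀ a : G, a⁻¹⁻¹ = a
  mul_assoc' : ∀ a b c : G, a * b ≠ 0 → b * c ≠ 0 → a * b * c = a * (b * c)
  mul_ne_zero_iff' : ∀ a b : G, a ≠ 0 → b ≠ 0 → (a * b ≠ 0 ↔ a⁻¹ * a = b * b⁻¹)
  mul_inv_self_mul' : ∀ a : G, a * a⁻¹ * a = a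
  mul_inv_rev' : ∀ a b : G, (a * b)⁻¹ = b⁻¹ * a⁻¹

/-- The unit space `G⁰`: the nonzero idempotents. -/
def unitSpace (G : Type*) [GroupoidZ G] : Set G := {e | e ≠ 0 ∧ e * e = e}

/-- A bisection: a set of groupoid elements on which range and source are injective. -/
def IsBisection {G : Type*} [GroupoidZ G] (B : Set G) : Prop :=
  (0 : G) ∉ B ∧ (∀ a ∈ B, ∀ b ∈ B, a * a⁻¹ = b * b⁻¹ → a = b) ∧
    (∀ a ∈ B, ∀ b ∈ B, a⁻¹ * a = b⁻¹ * b → a = b)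

/-- A set is full if its range and source images are the whole unit space. -/
def IsFull {G : Type*} [GroupoidZ G] (B : Set G) : Prop :=
  (fun a => a * a⁻¹) '' B = unitSpace G ∧ (fun a => a⁻¹ * a) '' B = unitSpace G

/-- Compact open bisection. -/
def IsCOB {G : Type*} [GroupoidZ G] [TopologicalSpace G] (B : Set G) : Prop :=
  IsBisection B ∧ IsCompact B ∧ IsOpen B

/-- The product `AB = {αβ : (α,β) composable}` of two subsets of a groupoid. -/
def setMul {G : Type*} [GroupoidZ G] (A B : Set G) : Set G := Set.image2 (· * ·) A B \ {0}

/-- The inverse `B⁻¹ = {γ⁻¹ : γ ∈ B}` of a subset of a groupoid. -/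
def setInv {G : Type*} [GroupoidZ G] (B : Set G) : Set G := Inv.inv '' B

/-- The topological full group `F(G)`: all full compact open bisections. -/
def fullBisections (G : Type*) [GroupoidZ G] [TopologicalSpace G] : Set (Set G) :=
  {B | IsCOB B ∧ IsFull B}

/-- Indicator function `1_B : G → ℂ`. -/
noncomputable def indic {G : Type*} [GroupoidZ G] (B : Set G) : G → ℂ := Set.indicator B 1

/-- Convolution product on functions `G → ℂ`: `(f * g)(γ) = ∑_{αβ = γ} f(α) g(β)`. -/
noncomputable def convol {G : Type*} [GroupoidZ G] (f g : G → ℂ) : G → ℂ := fun γ =>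
  if γ = 0 then 0 else ∑ᶠ p ∈ {p : G × G | p.1 * p.2 = γ}, f p.1 * g p.2

/-- The `*`-involution `f^*(γ) = conj (f (γ⁻¹))`. -/
noncomputable def starF {G : Type*} [GroupoidZ G] (f : G → ℂ) : G → ℂ := fun γ =>
  (starRingEnd ℂ) (f γ⁻¹)

/-- An ample Hausdorff (étale) groupoid: Hausdorff, locally compact, continuous inversion
and (partial) multiplication, the unit space is open and closed, the range map is open,
and there is a basis of compact open bisections.  The adjoined `0` is an isolated point. -/
class AmpleGroupoid (G : Type*) [TopologicalSpace G] extends GroupoidZ G where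
  t2' : T2Space G
  locallyCompact' : LocallyCompactSpace G
  isolated_zero' : IsOpen {(0 : G)}
  continuous_inv' : Continuous (fun a : G => a⁻¹)
  continuousOn_mul' : ContinuousOn (fun p : G × G => p.1 * p.2) {p : G × G | p.1 * p.2 ≠ 0}
  isOpen_unitSpace' : IsOpen (unitSpace G)
  isClosed_unitSpace' : IsClosed (unitSpace G)
  isOpenMap_range' : ∀ B : Set G, IsOpen B → (0 : G) ∉ B → IsOpen ((fun a => a * a⁻¹) '' B)
  ample_basis' : ∀ (a : G) (U : Set G), a ≠ 0 → IsOpen U → a ∈ U →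
    ∃ B : Set G, IsCOB B ∧ a ∈ B ∧ B ⊆ U

/-- The image `π(ℂF(G))` of the representation of the topological full group: the span of
the indicator functions of full compact open bisections. -/
noncomputable def spanFull (G : Type*) [GroupoidZ G] [TopologicalSpace G] :
    Submodule ℂ (G → ℂ) :=
  Submodule.span ℂ {f | ∃ B ∈ fullBisections G, f = indic B}

/-- The Steinberg algebra `A(G)` (as a subspace of `G → ℂ`): the span of the indicator
functions of compact open bisections. -/
noncomputable def steinberg (G : Type*) [GroupoidZ G] [TopologicalSpace G] :
    Submodule ℂ (G → ℂ) :=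
  Submodule.span ℂ {f | ∃ B : Set G, IsCOB B ∧ f = indic B}

section AuxLemmas

variable {G : Type*} [GroupoidZ G]

lemma gz_inv_ne_zero {a : G} (h : a ≠ 0) : a⁻¹ ≠ 0 := fun h0 => h (by
  rw [← GroupoidZ.inv_inv' a, h0, GroupoidZ.inv_zero'])

lemma gz_range_ne_zero {a : G} (h : a ≠ 0) : a * a⁻¹ ≠ 0 := fun h0 => h (by
  have hm := GroupoidZ.mul_inv_self_mul' a
  rw [h0, GroupoidZ.zero_mul'] at hm
  exact hm.symm)

lemma gz_source_ne_zero {a : G} (h : a ≠ 0) : a⁻¹ * a ≠ 0 := by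
  have := gz_range_ne_zero (gz_inv_ne_zero h)
  rwa [GroupoidZ.inv_inv'] at this

lemma gz_range_unit {a : G} (h : a ≠ 0) : a * a⁻¹ ∈ unitSpace G := by
  refine ⟨gz_range_ne_zero h, ?_⟩
  have h1 : (a * a⁻¹) * a ≠ 0 := by
    rw [GroupoidZ.mul_inv_self_mul']; exact h
  have h2 := GroupoidZ.mul_assoc' (a * a⁻¹) a a⁻¹ h1 (gz_range_ne_zero h)
  rw [GroupoidZ.mul_inv_self_mul'] at h2
  exact h2.symm

lemma gz_unit_self_mul (hIso : ∀ a : G, a * a⁻¹ = a⁻¹ * a) {u : G}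
    (hu : u ∈ unitSpace G) : u * u⁻¹ = u := by
  obtain ⟨h0, hi⟩ := hu
  have hs : u⁻¹ * u ≠ 0 := gz_source_ne_zero h0
  have huu : u * u ≠ 0 := by rw [hi]; exact h0
  calc u * u⁻¹ = u⁻¹ * u := hIso u
    _ = u⁻¹ * (u * u) := by rw [hi]
    _ = u⁻¹ * u * u := (GroupoidZ.mul_assoc' u⁻¹ u u hs huu).symm
    _ = u * u⁻¹ * u := by rw [← hIso]
    _ = u := GroupoidZ.mul_inv_self_mul' u

lemma gz_unit_source_mul (hIso : ∀ a : G, a * a⁻¹ = a⁻¹ * a) {u : G}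
    (hu : u ∈ unitSpace G) : u⁻¹ * u = u := by
  rw [← hIso]; exact gz_unit_self_mul hIso hu

end AuxLemmas

/-- Suppose `G = Γ ⊔ X`, where `Γ` is a (discrete) group attached at the
single unit `e` and all other elements are units with trivial isotropy, i.e. every non-unit
element of `G` has range and source `e`.  Then `F(G) = { {γ} ⊔ (G⁰ \ {e}) : γ ∈ Γ }` and
the representation `π : ℂF(G) → A(G)` is injective. -/
theorem fullBisections_of_group_attached {G : Type*} [TopologicalSpace G] [AmpleGroupoid G]
    (hcomp : IsCompact (unitSpace G)) (e : G) (he : e ∈ unitSpace G)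
    (hallIso : ∀ a : G, a * a⁻¹ = a⁻¹ * a)
    (hX : ∀ a : G, a ≠ 0 → a ∉ unitSpace G → a * a⁻¹ = e) :
    fullBisections G =
      {S : Set G | ∃ γ : G, γ ≠ 0 ∧ γ * γ⁻¹ = e ∧ γ⁻¹ * γ = e ∧
        S = insert γ (unitSpace G \ {e})} ∧
    LinearIndependent ℂ
      (fun B : {B : Set G // B ∈ fullBisections G} => indic B.1) := by
  haveI : T2Space G := AmpleGroupoid.t2' (G := G)
  have he0 : e ≠ 0 := he.1
  -- range of a unit is itself
  have key2 : ∀ u : G, u ∈ unitSpace G → u * u⁻¹ = u := fun u hu =>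
    gz_unit_self_mul hallIso hu
  -- the set equality
  have hset : fullBisections G =
      {S : Set G | ∃ γ : G, γ ≠ 0 ∧ γ * γ⁻¹ = e ∧ γ⁻¹ * γ = e ∧
        S = insert γ (unitSpace G \ {e})} := by
    ext B
    simp only [fullBisections, Set.mem_setOf_eq]
    constructor
    · rintro ⟨⟨⟨h0B, hrinj, _⟩, _, _⟩, hrfull, _⟩
      obtain ⟨γ, hγB, hγr⟩ : ∃ γ ∈ B, γ * γ⁻¹ = e := by
        have : e ∈ (fun a => a * a⁻¹) '' B := by rw [hrfull]; exact he
        obtain ⟨γ, hγB, hγr⟩ := this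
        exact ⟨γ, hγB, hγr⟩
      have hγ0 : γ ≠ 0 := fun h => h0B (h ▸ hγB)
      refine ⟨γ, hγ0, hγr, by rw [← hallIso]; exact hγr, ?_⟩
      ext b
      constructor
      · intro hbB
        have hb0 : b ≠ 0 := fun h => h0B (h ▸ hbB)
        by_cases hbu : b ∈ unitSpace G
        · by_cases hbe : b = e
          · left
            exact hrinj b hbB γ hγB (by rw [key2 b hbu, hbe, hγr])
          · exact Or.inr ⟨hbu, hbe⟩
        · left
          exact hrinj b hbB γ hγB (by rw [hX b hb0 hbu, hγr])
      · rintro (rfl | ⟨hbu, hbe⟩)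
        · exact hγB
        · have : b ∈ (fun a => a * a⁻¹) '' B := by rw [hrfull]; exact hbu
          obtain ⟨c, hcB, hcr⟩ := this
          change c * c⁻¹ = b at hcr
          have hc0 : c ≠ 0 := fun h => h0B (h ▸ hcB)
          by_cases hcu : c ∈ unitSpace G
          · rw [key2 c hcu] at hcr
            exact hcr ▸ hcB
          · exact absurd (show b = e by rw [← hcr, hX c hc0 hcu])
              (fun h => hbe (Set.mem_singleton_iff.mpr h))
    · rintro ⟨γ, hγ0, hγr, hγs, rfl⟩
      have hγnmem : γ ∉ unitSpace G \ {e} := by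
        rintro ⟨hu, hne⟩
        exact hne (Set.mem_singleton_iff.mpr (by rw [← key2 γ hu, hγr]))
      -- range on the set
      have hrange : ∀ b ∈ insert γ (unitSpace G \ {e}), b * b⁻¹ = e ∨
          (b ∈ unitSpace G ∧ b * b⁻¹ = b ∧ b ≠ e) := by
        rintro b (rfl | ⟨hbu, hbe⟩)
        · exact Or.inl hγr
        · exact Or.inr ⟨hbu, key2 b hbu, hbe⟩
      have h0mem : (0 : G) ∉ insert γ (unitSpace G \ {e}) := by
        rintro (h | ⟨⟨h1, _⟩, _⟩)
        · exact hγ0 h.symm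
        · exact h1 rfl
      -- injectivity of range
      have heq_gamma : ∀ b ∈ insert γ (unitSpace G \ {e}), b * b⁻¹ = e → b = γ := by
        rintro b (rfl | ⟨hbu, hbne⟩) hbe
        · rfl
        · exact absurd (Set.mem_singleton_iff.mpr (by rw [← key2 b hbu, hbe])) hbne
      have hrinj : ∀ a ∈ insert γ (unitSpace G \ {e}),
          ∀ b ∈ insert γ (unitSpace G \ {e}), a * a⁻¹ = b * b⁻¹ → a = b := by
        intro a ha b hb hab
        rcases hrange a ha with hae | ⟨_, har, hane⟩ <;>
          rcases hrange b hb with hbe | ⟨_, hbr, hbne⟩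
        · rw [heq_gamma a ha hae, heq_gamma b hb hbe]
        · exact absurd (show b = e by rw [← hbr, ← hab, hae]) hbne
        · exact absurd (show a = e by rw [← har, hab, hbe]) hane
        · rw [← har, hab, hbr]
      -- compact and open
      have hco : IsCompact (insert γ (unitSpace G \ {e})) ∧
          IsOpen (insert γ (unitSpace G \ {e})) := by
        by_cases hγe : γ = e
        · subst hγe
          have : insert γ (unitSpace G \ {γ}) = unitSpace G := by
            rw [Set.insert_diff_singleton, Set.insert_eq_self.mpr he]
          rw [this]
          exact ⟨hcomp, AmpleGroupoid.isOpen_unitSpace'⟩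
        · have hγnu : γ ∉ unitSpace G := fun hu =>
            hγe (by rw [← key2 γ hu, hγr])
          obtain ⟨B0, ⟨⟨h0B0, hrinj0, _⟩, _, hB0open⟩, hγB0, _⟩ :=
            AmpleGroupoid.ample_basis' γ Set.univ hγ0 isOpen_univ trivial
          have hCopen : IsOpen (B0 \ unitSpace G) :=
            hB0open.sdiff AmpleGroupoid.isClosed_unitSpace'
          have hCeq : B0 \ unitSpace G = {γ} := by
            apply Set.Subset.antisymm
            · rintro c ⟨hcB, hcu⟩
              have hc0 : c ≠ 0 := fun h => h0B0 (h ▸ hcB)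
              exact hrinj0 c hcB γ hγB0 (by rw [hX c hc0 hcu, hγr])
            · rintro c rfl
              exact ⟨hγB0, hγnu⟩
          have hγopen : IsOpen ({γ} : Set G) := hCeq ▸ hCopen
          have heopen : IsOpen ({e} : Set G) := by
            have := AmpleGroupoid.isOpenMap_range' {γ} hγopen
              (by simp [Ne.symm hγ0])
            have himg : (fun a : G => a * a⁻¹) '' {γ} = {e} := by
              rw [Set.image_singleton, hγr]
            rw [himg] at this
            exact this
          have hXclosed : IsClosed (unitSpace G \ {e}) :=
            AmpleGroupoid.isClosed_unitSpace'.sdiff heopen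
          have hXcomp : IsCompact (unitSpace G \ {e}) :=
            hcomp.of_isClosed_subset hXclosed Set.diff_subset
          have hXopen : IsOpen (unitSpace G \ {e}) :=
            AmpleGroupoid.isOpen_unitSpace'.sdiff isClosed_singleton
          rw [Set.insert_eq]
          exact ⟨isCompact_singleton.union hXcomp, hγopen.union hXopen⟩
      -- fullness: range image
      have hrimg : (fun a : G => a * a⁻¹) '' insert γ (unitSpace G \ {e}) =
          unitSpace G := by
        apply Set.Subset.antisymm
        · rintro u ⟨b, hb, rfl⟩
          show b * b⁻¹ ∈ unitSpace G
          rcases hrange b hb with hbe | ⟨hbu, hbr, _⟩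
          · rw [hbe]; exact he
          · rw [hbr]; exact hbu
        · intro u hu
          by_cases hue : u = e
          · exact ⟨γ, Or.inl rfl, show γ * γ⁻¹ = u by rw [hγr, hue]⟩
          · exact ⟨u, Or.inr ⟨hu, hue⟩, key2 u hu⟩
      have hfunEq : (fun a : G => a⁻¹ * a) = fun a : G => a * a⁻¹ :=
        funext fun a => (hallIso a).symm
      refine ⟨⟨⟨h0mem, hrinj, ?_⟩, hco.1, hco.2⟩, hrimg, by rw [hfunEq]; exact hrimg⟩
      intro a ha b hb hab
      rw [← hallIso, ← hallIso] at hab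
      exact hrinj a ha b hb hab
  refine ⟨hset, ?_⟩
  -- linear independence
  have hP : ∀ B : {B : Set G // B ∈ fullBisections G}, ∃ γ : G, γ ≠ 0 ∧
      γ * γ⁻¹ = e ∧ γ⁻¹ * γ = e ∧ B.1 = insert γ (unitSpace G \ {e}) := fun B =>
    hset.subset B.2
  classical
  set w : {B : Set G // B ∈ fullBisections G} → G := fun B => (hP B).choose with hw
  have hwspec : ∀ B, (w B) ≠ 0 ∧ (w B) * (w B)⁻¹ = e ∧ (w B)⁻¹ * (w B) = e ∧
      B.1 = insert (w B) (unitSpace G \ {e}) := fun B => (hP B).choose_spec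
  have hwnmem : ∀ B, w B ∉ unitSpace G \ {e} := by
    rintro B ⟨hu, hne⟩
    exact hne (Set.mem_singleton_iff.mpr (by rw [← key2 (w B) hu, (hwspec B).2.1]))
  have hwmem : ∀ B, w B ∈ B.1 := fun B => by
    rw [(hwspec B).2.2.2]; exact Or.inl rfl
  have hsep : ∀ B B', w B ∈ B'.1 → B = B' := by
    intro B B' hmem
    rw [(hwspec B').2.2.2] at hmem
    rcases hmem with heq | hmem
    · apply Subtype.ext
      rw [(hwspec B).2.2.2, (hwspec B').2.2.2, heq]
    · exact absurd hmem (hwnmem B)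
  rw [linearIndependent_iff']
  intro s g hsum i hi
  have hev := congrFun hsum (w i)
  simp only [Finset.sum_apply, Pi.smul_apply, Pi.zero_apply, smul_eq_mul] at hev
  rw [Finset.sum_eq_single i] at hev
  · rw [indic, Set.indicator_of_mem (hwmem i), Pi.one_apply, mul_one] at hev
    exact hev
  · intro j _ hji
    have : w i ∉ j.1 := fun hmem => hji ((hsep i j hmem).symm)
    rw [indic, Set.indicator_of_notMem this, mul_zero]
  · intro h; exact absurd hi h
end

section
/- Let G be an ample Hausdorff groupoid with compact unit space. For every f in the image π(ℂF(G)) of the representation of the topological full group in the Steinberg algebra, and for all units u, v ∈ G^{(0)}, the range sum r_*f(u) := Σ_{γ ∈ G^u} f(γ) equals the source sum s_*f(v) := Σ_{γ ∈ G_v} f(γ). In particular π(ℂF(G)) ⊆ ker(s_* − r_*). -/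
open scoped Classical

section Aux

variable {G : Type*} [GroupoidZ G]

private lemma rset_singleton {B : Set G} (hB : IsBisection B) (hfull : IsFull B) {u : G}
    (hu : u ∈ unitSpace G) : ∃ γ₀ ∈ B, {γ : G | γ ≠ 0 ∧ γ * γ⁻¹ = u} ∩ B = {γ₀} := by
  obtain ⟨γ₀, hγ₀B, hγ₀⟩ : ∃ γ₀ ∈ B, γ₀ * γ₀⁻¹ = u := by
    have h := hfull.1
    have : u ∈ (fun a => a * a⁻¹) '' B := h ▸ hu
    obtain ⟨γ₀, hγ₀B, hγ₀⟩ := this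
    exact ⟨γ₀, hγ₀B, hγ₀⟩
  refine ⟨γ₀, hγ₀B, ?_⟩
  ext γ
  constructor
  · rintro ⟨⟨hne, hr⟩, hγB⟩
    exact hB.2.1 γ hγB γ₀ hγ₀B (hr.trans hγ₀.symm)
  · rintro rfl
    exact ⟨⟨fun h => hB.1 (h ▸ hγ₀B), hγ₀⟩, hγ₀B⟩

private lemma sset_singleton {B : Set G} (hB : IsBisection B) (hfull : IsFull B) {u : G}
    (hu : u ∈ unitSpace G) : ∃ γ₀ ∈ B, {γ : G | γ ≠ 0 ∧ γ⁻¹ * γ = u} ∩ B = {γ₀} := by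
  obtain ⟨γ₀, hγ₀B, hγ₀⟩ : ∃ γ₀ ∈ B, γ₀⁻¹ * γ₀ = u := by
    have h := hfull.2
    have : u ∈ (fun a => a⁻¹ * a) '' B := h ▸ hu
    obtain ⟨γ₀, hγ₀B, hγ₀⟩ := this
    exact ⟨γ₀, hγ₀B, hγ₀⟩
  refine ⟨γ₀, hγ₀B, ?_⟩
  ext γ
  constructor
  · rintro ⟨⟨hne, hr⟩, hγB⟩
    exact hB.2.2 γ hγB γ₀ hγ₀B (hr.trans hγ₀.symm)
  · rintro rfl
    exact ⟨⟨fun h => hB.1 (h ▸ hγ₀B), hγ₀⟩, hγ₀B⟩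

private lemma support_indic (B : Set G) : Function.support (indic B) = B := by
  ext γ
  simp [indic, Set.indicator_apply]

private lemma finsum_mem_indic_eq_one {B : Set G} {S : Set G} {γ₀ : G} (hγ₀B : γ₀ ∈ B)
    (hS : S ∩ B = {γ₀}) : ∑ᶠ γ ∈ S, indic B γ = 1 := by
  rw [← finsum_mem_inter_support, support_indic, hS, finsum_mem_singleton]
  simp [indic, Set.indicator_of_mem hγ₀B]

private lemma finsum_mem_smul_aux {α : Type*} (c : ℂ) (f : α → ℂ) (s : Set α) :
    ∑ᶠ i ∈ s, c • f i = c • ∑ᶠ i ∈ s, f i := by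
  rw [finsum_mem_def, finsum_mem_def, smul_finsum]
  congr 1
  ext i
  exact Set.indicator_smul_apply s (fun _ => c) f i

end Aux

/-- For every `f` in the image `π(ℂF(G))` (the span of indicators of full
compact open bisections), and all units `u, v`, the range sum `r_*f(u) = ∑_{r(γ)=u} f(γ)`
equals the source sum `s_*f(v) = ∑_{s(γ)=v} f(γ)`; in particular `f ∈ ker (s_* - r_*)`. -/
theorem rep_image_range_source_sums {G : Type*} [TopologicalSpace G] [AmpleGroupoid G]
    (hcomp : IsCompact (unitSpace G)) :
    ∀ f ∈ spanFull G,
      (∀ u ∈ unitSpace G, ∀ v ∈ unitSpace G,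
        (∑ᶠ γ ∈ {γ : G | γ ≠ 0 ∧ γ * γ⁻¹ = u}, f γ) =
          ∑ᶠ γ ∈ {γ : G | γ ≠ 0 ∧ γ⁻¹ * γ = v}, f γ) ∧
      (∀ u ∈ unitSpace G,
        (∑ᶠ γ ∈ {γ : G | γ ≠ 0 ∧ γ⁻¹ * γ = u}, f γ) -
          (∑ᶠ γ ∈ {γ : G | γ ≠ 0 ∧ γ * γ⁻¹ = u}, f γ) = 0) := by
  intro f hf
  set R : G → Set G := fun u => {γ : G | γ ≠ 0 ∧ γ * γ⁻¹ = u} with hR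
  set S : G → Set G := fun u => {γ : G | γ ≠ 0 ∧ γ⁻¹ * γ = u} with hS
  suffices h : ∃ c : ℂ, ∀ u ∈ unitSpace G,
      (R u ∩ Function.support f).Finite ∧ (S u ∩ Function.support f).Finite ∧
      (∑ᶠ γ ∈ R u, f γ) = c ∧ (∑ᶠ γ ∈ S u, f γ) = c by
    obtain ⟨c, hc⟩ := h
    constructor
    · intro u hu v hv
      rw [(hc u hu).2.2.1, (hc v hv).2.2.2]
    · intro u hu
      rw [(hc u hu).2.2.1, (hc u hu).2.2.2, sub_self]
  induction hf using Submodule.span_induction with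
  | mem g hg =>
    obtain ⟨B, hBfull, rfl⟩ := hg
    obtain ⟨⟨hBbisec, -, -⟩, hfull⟩ := hBfull
    refine ⟨1, fun u hu => ?_⟩
    obtain ⟨γr, hγrB, hr⟩ := rset_singleton hBbisec hfull hu
    obtain ⟨γs, hγsB, hs⟩ := sset_singleton hBbisec hfull hu
    rw [support_indic]
    refine ⟨hr ▸ Set.finite_singleton γr, hs ▸ Set.finite_singleton γs, ?_, ?_⟩
    · exact finsum_mem_indic_eq_one hγrB hr
    · exact finsum_mem_indic_eq_one hγsB hs
  | zero =>
    refine ⟨0, fun u hu => ?_⟩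
    simp [Function.support_zero]
  | add x y hx hy ihx ihy =>
    obtain ⟨cx, hcx⟩ := ihx
    obtain ⟨cy, hcy⟩ := ihy
    refine ⟨cx + cy, fun u hu => ?_⟩
    obtain ⟨hRx, hSx, hrx, hsx⟩ := hcx u hu
    obtain ⟨hRy, hSy, hry, hsy⟩ := hcy u hu
    have hsupp : Function.support (x + y) ⊆ Function.support x ∪ Function.support y :=
      Function.support_add x y
    have hRfin : (R u ∩ Function.support (x + y)).Finite := by
      refine Set.Finite.subset (hRx.union hRy) ?_
      rw [← Set.inter_union_distrib_left]
      exact Set.inter_subset_inter_right _ hsupp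
    have hSfin : (S u ∩ Function.support (x + y)).Finite := by
      refine Set.Finite.subset (hSx.union hSy) ?_
      rw [← Set.inter_union_distrib_left]
      exact Set.inter_subset_inter_right _ hsupp
    refine ⟨hRfin, hSfin, ?_, ?_⟩
    · calc ∑ᶠ γ ∈ R u, (x + y) γ = ∑ᶠ γ ∈ R u, (x γ + y γ) := by simp [Pi.add_apply]
        _ = (∑ᶠ γ ∈ R u, x γ) + ∑ᶠ γ ∈ R u, y γ := finsum_mem_add_distrib' hRx hRy
        _ = cx + cy := by rw [hrx, hry]
    · calc ∑ᶠ γ ∈ S u, (x + y) γ = ∑ᶠ γ ∈ S u, (x γ + y γ) := by simp [Pi.add_apply]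
        _ = (∑ᶠ γ ∈ S u, x γ) + ∑ᶠ γ ∈ S u, y γ := finsum_mem_add_distrib' hSx hSy
        _ = cx + cy := by rw [hsx, hsy]
  | smul a x hx ihx =>
    obtain ⟨cx, hcx⟩ := ihx
    refine ⟨a * cx, fun u hu => ?_⟩
    obtain ⟨hRx, hSx, hrx, hsx⟩ := hcx u hu
    have hsupp : Function.support (a • x) ⊆ Function.support x := by
      intro γ h hx
      exact h (by simp [Pi.smul_apply, hx])
    refine ⟨Set.Finite.subset hRx (Set.inter_subset_inter_right _ hsupp),
      Set.Finite.subset hSx (Set.inter_subset_inter_right _ hsupp), ?_, ?_⟩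
    · calc ∑ᶠ γ ∈ R u, (a • x) γ = ∑ᶠ γ ∈ R u, a • x γ := by simp [Pi.smul_apply]
        _ = a • ∑ᶠ γ ∈ R u, x γ := finsum_mem_smul_aux a x (R u)
        _ = a * cx := by rw [hrx]; simp
    · calc ∑ᶠ γ ∈ S u, (a • x) γ = ∑ᶠ γ ∈ S u, a • x γ := by simp [Pi.smul_apply]
        _ = a • ∑ᶠ γ ∈ S u, x γ := finsum_mem_smul_aux a x (S u)
        _ = a * cx := by rw [hsx]; simp
end

section
/- Let G be a discrete groupoid with finite unit space {a_1,…,a_n}. For every f ∈ π(ℂF(G)), there exists a constant c_f ∈ ℂ such that every row sum and every column sum of the matrix T(f) equals c_f, where T(f)_{ij} = Σ_{γ ∈ G^{a_i}_{a_j}} f(γ). -/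
open scoped Classical

/-- The convolution product on `A(G) = C_c(G)`, the finitely supported functions `G → ℂ`
(non-composable products, i.e. products equal to `0`, do not contribute). -/
noncomputable def convF {G : Type*} [GroupoidZ G] (f g : G →₀ ℂ) : G →₀ ℂ :=
  f.sum fun a ca => g.sum fun b cb =>
    if a * b ≠ 0 then Finsupp.single (a * b) (ca * cb) else 0

/-- The `*`-involution `f^*(γ) = conj (f (γ⁻¹))` on `A(G) = C_c(G)`. -/
noncomputable def starFsupp {G : Type*} [GroupoidZ G] (f : G →₀ ℂ) : G →₀ ℂ :=
  f.sum fun a ca => Finsupp.single a⁻¹ ((starRingEnd ℂ) ca)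

/-- The map `T : A(G) → M_n(ℂ)`, `T(f)_{ij} = ∑_{γ ∈ G^{a_i}_{a_j}} f(γ)`, with rows and
columns indexed by the (finite) unit space. -/
noncomputable def Tmat {G : Type*} [GroupoidZ G] (f : G →₀ ℂ) :
    Matrix (unitSpace G) (unitSpace G) ℂ := fun i j =>
  ∑ γ ∈ f.support, if γ * γ⁻¹ = (i : G) ∧ γ⁻¹ * γ = (j : G) then f γ else 0

/-- The image `π(ℂF(G))` of the representation of the topological full group in
`A(G) = C_c(G)`: the span of the indicator functions of full bisections.  (For a discrete
groupoid with finite unit space, every full bisection is finite, and the full compact open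
bisections are exactly the full finite bisections.) -/
noncomputable def spanFullD (G : Type*) [GroupoidZ G] : Submodule ℂ (G →₀ ℂ) :=
  Submodule.span ℂ {f | ∃ B : Finset G, IsBisection (B : Set G) ∧ IsFull (B : Set G) ∧
    f = ∑ γ ∈ B, Finsupp.single γ (1 : ℂ)}

/-- A C*-seminorm on the convolution `*`-algebra `C_c(G)`. -/
def IsCstarSeminorm {G : Type*} [GroupoidZ G] (N : (G →₀ ℂ) → ℝ) : Prop :=
  (∀ f, 0 ≤ N f) ∧ (∀ f g, N (f + g) ≤ N f + N g) ∧
    (∀ (c : ℂ) (f), N (c • f) = ‖c‖ * N f) ∧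
    (∀ f g, N (convF f g) ≤ N f * N g) ∧
    (∀ f, N (convF (starFsupp f) f) = N f ^ 2)

lemma Tmat_add {G : Type*} [GroupoidZ G] (f g : G →₀ ℂ) (i j : unitSpace G) :
    Tmat (f + g) i j = Tmat f i j + Tmat g i j := by
  classical
  have : ∀ h : G →₀ ℂ, Tmat h i j
      = Finsupp.sum h (fun γ c => if γ * γ⁻¹ = (i : G) ∧ γ⁻¹ * γ = (j : G) then c else 0) :=
    fun h => rfl
  rw [this, this, this]
  refine Finsupp.sum_add_index' (fun γ => by simp) (fun γ c d => ?_)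
  by_cases h : γ * γ⁻¹ = (i : G) ∧ γ⁻¹ * γ = (j : G) <;> simp [h]

lemma Tmat_smul {G : Type*} [GroupoidZ G] (c : ℂ) (f : G →₀ ℂ) (i j : unitSpace G) :
    Tmat (c • f) i j = c * Tmat f i j := by
  classical
  have hT : ∀ h : G →₀ ℂ, Tmat h i j
      = Finsupp.sum h (fun γ d => if γ * γ⁻¹ = (i : G) ∧ γ⁻¹ * γ = (j : G) then d else 0) :=
    fun h => rfl
  rw [hT, hT, Finsupp.sum_smul_index' (fun γ => by simp), Finsupp.mul_sum]
  refine Finsupp.sum_congr fun γ _ => ?_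
  by_cases h : γ * γ⁻¹ = (i : G) ∧ γ⁻¹ * γ = (j : G) <;> simp [h]

lemma Tmat_indicator {G : Type*} [GroupoidZ G] (B : Finset G) (i j : unitSpace G) :
    Tmat (∑ γ ∈ B, Finsupp.single γ (1 : ℂ)) i j
      = ∑ γ ∈ B, if γ * γ⁻¹ = (i : G) ∧ γ⁻¹ * γ = (j : G) then 1 else 0 := by
  classical
  set f : G →₀ ℂ := ∑ γ ∈ B, Finsupp.single γ (1 : ℂ) with hfdef
  have hf : ∀ x, f x = if x ∈ B then 1 else 0 := by
    intro x
    rw [hfdef, Finset.sum_apply']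
    simp_rw [Finsupp.single_apply]
    exact Finset.sum_ite_eq' B x (fun _ => (1 : ℂ))
  have hsub : f.support ⊆ B := by
    intro x hx
    by_contra hxB
    exact (Finsupp.mem_support_iff.mp hx) (by rw [hf x, if_neg hxB])
  show (∑ γ ∈ f.support, if γ * γ⁻¹ = (i : G) ∧ γ⁻¹ * γ = (j : G) then f γ else 0) = _
  rw [Finset.sum_subset hsub (fun x hxB hxs => by
    rw [Finsupp.notMem_support_iff.mp hxs]; simp)]
  refine Finset.sum_congr rfl fun γ hγ => ?_
  rw [hf γ, if_pos hγ]

lemma gen_sums {G : Type*} [GroupoidZ G] [Fintype (unitSpace G)] (B : Finset G)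
    (hBis : IsBisection (B : Set G)) (hFull : IsFull (B : Set G)) :
    (∀ i : unitSpace G, ∑ j : unitSpace G,
        Tmat (∑ γ ∈ B, Finsupp.single γ (1 : ℂ)) i j = 1) ∧
    (∀ j : unitSpace G, ∑ i : unitSpace G,
        Tmat (∑ γ ∈ B, Finsupp.single γ (1 : ℂ)) i j = 1) := by
  classical
  constructor
  · intro i
    simp_rw [Tmat_indicator]
    rw [Finset.sum_comm]
    have hrow : ∀ γ ∈ B, (∑ j : unitSpace G,
        if γ * γ⁻¹ = (i : G) ∧ γ⁻¹ * γ = (j : G) then (1 : ℂ) else 0)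
          = if γ * γ⁻¹ = (i : G) then 1 else 0 := by
      intro γ hγ
      have hs : γ⁻¹ * γ ∈ unitSpace G := by
        rw [← hFull.2]; exact ⟨γ, hγ, rfl⟩
      by_cases h : γ * γ⁻¹ = (i : G)
      · simp only [h, true_and, if_pos]
        have : ∀ j : unitSpace G,
            (if γ⁻¹ * γ = (j : G) then (1 : ℂ) else 0)
              = if j = (⟨γ⁻¹ * γ, hs⟩ : unitSpace G) then 1 else 0 := by
          intro j
          congr 1
          simp only [eq_iff_iff]
          constructor
          · intro hh; exact Subtype.ext hh.symm
          · intro hh; rw [hh]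
        simp_rw [this]
        simp
      · simp [h]
    rw [Finset.sum_congr rfl hrow]
    have hi := (Set.ext_iff.mp hFull.1 (i : G)).mpr i.2
    obtain ⟨γ₀, hγ₀B, hγ₀r⟩ := hi
    refine Finset.sum_eq_single_of_mem γ₀ hγ₀B ?_ |>.trans (if_pos hγ₀r)
    intro γ hγ hne
    rw [if_neg]
    intro hr
    exact hne (hBis.2.1 γ hγ γ₀ hγ₀B (hr.trans hγ₀r.symm))
  · intro j
    simp_rw [Tmat_indicator]
    rw [Finset.sum_comm]
    have hcol : ∀ γ ∈ B, (∑ i : unitSpace G,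
        if γ * γ⁻¹ = (i : G) ∧ γ⁻¹ * γ = (j : G) then (1 : ℂ) else 0)
          = if γ⁻¹ * γ = (j : G) then 1 else 0 := by
      intro γ hγ
      have hr : γ * γ⁻¹ ∈ unitSpace G := by
        rw [← hFull.1]; exact ⟨γ, hγ, rfl⟩
      by_cases h : γ⁻¹ * γ = (j : G)
      · simp only [h, and_true, if_pos]
        have : ∀ i : unitSpace G,
            (if γ * γ⁻¹ = (i : G) then (1 : ℂ) else 0)
              = if i = (⟨γ * γ⁻¹, hr⟩ : unitSpace G) then 1 else 0 := by
          intro i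
          congr 1
          simp only [eq_iff_iff]
          constructor
          · intro hh; exact Subtype.ext hh.symm
          · intro hh; rw [hh]
        simp_rw [this]
        simp
      · simp [h]
    rw [Finset.sum_congr rfl hcol]
    have hj := (Set.ext_iff.mp hFull.2 (j : G)).mpr j.2
    obtain ⟨γ₀, hγ₀B, hγ₀s⟩ := hj
    refine Finset.sum_eq_single_of_mem γ₀ hγ₀B ?_ |>.trans (if_pos hγ₀s)
    intro γ hγ hne
    rw [if_neg]
    intro hss
    exact hne (hBis.2.2 γ hγ γ₀ hγ₀B (hss.trans hγ₀s.symm))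

/-- For a discrete groupoid with finite unit space, every `f ∈ π(ℂF(G))`
has a constant `c_f ∈ ℂ` such that every row sum and every column sum of `T(f)` is `c_f`. -/
theorem Tmat_row_col_sums_const {G : Type*} [GroupoidZ G] [Fintype (unitSpace G)] :
    ∀ f ∈ spanFullD G, ∃ c : ℂ,
      (∀ i : unitSpace G, ∑ j : unitSpace G, Tmat f i j = c) ∧
      (∀ j : unitSpace G, ∑ i : unitSpace G, Tmat f i j = c) := by
  
  intro f hf
  unfold spanFullD at hf
  induction hf using Submodule.span_induction with
  | mem x hx =>
      obtain ⟨B, hBis, hFull, rfl⟩ := hx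
      exact ⟨1, (gen_sums B hBis hFull).1, (gen_sums B hBis hFull).2⟩
  | zero => exact ⟨0, fun i => by simp [Tmat], fun j => by simp [Tmat]⟩
  | add x y hx hy ihx ihy =>
      obtain ⟨c₁, h₁, h₁'⟩ := ihx
      obtain ⟨c₂, h₂, h₂'⟩ := ihy
      refine ⟨c₁ + c₂, fun i => ?_, fun j => ?_⟩
      · simp_rw [Tmat_add]; rw [Finset.sum_add_distrib, h₁ i, h₂ i]
      · simp_rw [Tmat_add]; rw [Finset.sum_add_distrib, h₁' j, h₂' j]
  | smul c x hx ih =>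
      obtain ⟨c₁, h₁, h₁'⟩ := ih
      refine ⟨c * c₁, fun i => ?_, fun j => ?_⟩
      · simp_rw [Tmat_smul]; rw [← Finset.mul_sum, h₁ i]
      · simp_rw [Tmat_smul]; rw [← Finset.mul_sum, h₁' j]
end

section
/- Let G be a discrete groupoid with finite unit space. The closure of π(ℂF(G)) in the full groupoid C*-algebra equals C*(G) if and only if G is a group. -/
open scoped Classical

namespace GZ
variable {G : Type*} [GroupoidZ G]

open GroupoidZ

lemma inv_ne {a : G} (ha : a ≠ 0) : a⁻¹ ≠ 0 := fun h => ha (by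
  rw [← inv_inv' a, h, inv_zero'])

lemma mul_inv_ne {a : G} (ha : a ≠ 0) : a * a⁻¹ ≠ 0 := by
  rw [mul_ne_zero_iff' a a⁻¹ ha (inv_ne ha), inv_inv']

lemma inv_mul_ne {a : G} (ha : a ≠ 0) : a⁻¹ * a ≠ 0 := by
  have := mul_inv_ne (inv_ne ha)
  rwa [inv_inv'] at this

lemma inv_mul_self_mul {a : G} : a⁻¹ * a * a⁻¹ = a⁻¹ := by
  have := mul_inv_self_mul' a⁻¹
  rwa [inv_inv'] at this

lemma range_unit {a : G} (ha : a ≠ 0) : a * a⁻¹ ∈ unitSpace G := by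
  refine ⟨mul_inv_ne ha, ?_⟩
  have h1 : a * a⁻¹ * a ≠ 0 := by rw [mul_inv_self_mul']; exact ha
  have := mul_assoc' (a * a⁻¹) a a⁻¹ h1 (mul_inv_ne ha)
  rw [mul_inv_self_mul'] at this
  exact this.symm ▸ this.symm

lemma source_unit {a : G} (ha : a ≠ 0) : a⁻¹ * a ∈ unitSpace G := by
  have := range_unit (inv_ne ha)
  rwa [inv_inv'] at this

lemma range_mul {a b : G} (ha : a ≠ 0) (hb : b ≠ 0) (hab : a * b ≠ 0) :
    (a * b) * (a * b)⁻¹ = a * a⁻¹ := by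
  have hsr : a⁻¹ * a = b * b⁻¹ := (mul_ne_zero_iff' a b ha hb).mp hab
  have hba : b⁻¹ * a⁻¹ ≠ 0 := by rw [← mul_inv_rev']; exact inv_ne hab
  have h1 : b * (b⁻¹ * a⁻¹) = a⁻¹ := by
    rw [← mul_assoc' b b⁻¹ a⁻¹ (mul_inv_ne hb) hba, ← hsr, inv_mul_self_mul]
  have h2 : b * (b⁻¹ * a⁻¹) ≠ 0 := by rw [h1]; exact inv_ne ha
  rw [mul_inv_rev', mul_assoc' a b (b⁻¹ * a⁻¹) hab h2, h1]

lemma source_mul {a b : G} (ha : a ≠ 0) (hb : b ≠ 0) (hab : a * b ≠ 0) :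
    (a * b)⁻¹ * (a * b) = b⁻¹ * b := by
  have hba : b⁻¹ * a⁻¹ ≠ 0 := by rw [← mul_inv_rev']; exact inv_ne hab
  have := range_mul (a := b⁻¹) (b := a⁻¹) (inv_ne hb) (inv_ne ha) hba
  rw [mul_inv_rev', inv_inv', inv_inv'] at this
  rw [mul_inv_rev']
  exact this

lemma unit_mul_inv {e : G} (he : e ∈ unitSpace G) : e * e⁻¹ = e := by
  obtain ⟨h0, hid⟩ := he
  have hee : e * e ≠ 0 := by rw [hid]; exact h0
  have hcomm : e⁻¹ * e = e * e⁻¹ := (mul_ne_zero_iff' e e h0 h0).mp hee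
  have h2 : (e⁻¹ * e) * e = e⁻¹ * e := by
    rw [mul_assoc' e⁻¹ e e (inv_mul_ne h0) hee, hid]
  rw [hcomm] at h2
  rw [← h2, mul_inv_self_mul']

lemma unit_inv_mul {e : G} (he : e ∈ unitSpace G) : e⁻¹ * e = e := by
  have hcomm : e⁻¹ * e = e * e⁻¹ :=
    (mul_ne_zero_iff' e e he.1 he.1).mp (by rw [he.2]; exact he.1)
  rw [hcomm, unit_mul_inv he]

lemma unit_inv {e : G} (he : e ∈ unitSpace G) : e⁻¹ = e := by
  have hinv_unit : e⁻¹ ∈ unitSpace G := by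
    refine ⟨inv_ne he.1, ?_⟩
    rw [← mul_inv_rev', he.2]
  have := unit_mul_inv hinv_unit
  rw [inv_inv'] at this
  rw [← this, unit_inv_mul he]

lemma zero_mul_zero_inv : (0 : G) * (0 : G)⁻¹ = 0 := by rw [inv_zero', mul_zero']

end GZ

namespace GZ
variable {G : Type*} [GroupoidZ G]
open GroupoidZ

/-- The entry functional as a linear map. -/
noncomputable def Tent (i j : unitSpace G) : (G →₀ ℂ) →ₗ[ℂ] ℂ :=
  Finsupp.lsum ℂ fun γ =>
    if γ * γ⁻¹ = (i : G) ∧ γ⁻¹ * γ = (j : G) then LinearMap.id else 0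

lemma Tent_single (i j : unitSpace G) (x : G) (c : ℂ) :
    Tent i j (Finsupp.single x c) =
      if x * x⁻¹ = (i : G) ∧ x⁻¹ * x = (j : G) then c else 0 := by
  rw [Tent, Finsupp.lsum_single]
  split_ifs <;> rfl

lemma Tmat_eq_Tent (f : G →₀ ℂ) (i j : unitSpace G) : Tmat f i j = Tent i j f := by
  rw [Tmat, Tent, Finsupp.lsum_apply, Finsupp.sum]
  refine Finset.sum_congr rfl fun γ _ => ?_
  split_ifs <;> rfl
end GZ

namespace GZ
variable {G : Type*} [GroupoidZ G]
open GroupoidZ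
open scoped Matrix

lemma Tmat_add (f g : G →₀ ℂ) : Tmat (f + g) = Tmat f + Tmat g := by
  ext i j
  rw [Matrix.add_apply, Tmat_eq_Tent, Tmat_eq_Tent, Tmat_eq_Tent, map_add]

lemma Tmat_smul (c : ℂ) (f : G →₀ ℂ) : Tmat (c • f) = c • Tmat f := by
  ext i j
  rw [Matrix.smul_apply, Tmat_eq_Tent, Tmat_eq_Tent, map_smul]

lemma Tmat_star (f : G →₀ ℂ) : Tmat (starFsupp f) = (Tmat f)ᴴ := by
  ext i j
  have hL : Tent i j (starFsupp f) = ∑ a ∈ f.support,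
      if a⁻¹ * a = (i : G) ∧ a * a⁻¹ = (j : G) then (starRingEnd ℂ) (f a) else 0 := by
    rw [starFsupp, map_finsuppSum, Finsupp.sum]
    refine Finset.sum_congr rfl fun a _ => ?_
    rw [Tent_single]
    simp only [inv_inv']
  have hR : (starRingEnd ℂ) (Tent j i f) = ∑ a ∈ f.support,
      if a * a⁻¹ = (j : G) ∧ a⁻¹ * a = (i : G) then (starRingEnd ℂ) (f a) else 0 := by
    rw [← Tmat_eq_Tent, Tmat, map_sum]
    refine Finset.sum_congr rfl fun a _ => ?_
    split_ifs <;> simp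
  rw [Matrix.conjTranspose_apply, Tmat_eq_Tent, Tmat_eq_Tent]
  calc Tent i j (starFsupp f)
      = (starRingEnd ℂ) (Tent j i f) := by
        rw [hL, hR]
        exact Finset.sum_congr rfl fun a _ => if_congr and_comm rfl rfl
    _ = star (Tent j i f) := rfl

variable [Fintype (unitSpace G)]

lemma key (i k : unitSpace G) (a b : G) (c d : ℂ) :
    (if a * b ≠ 0 ∧ (a * b) * (a * b)⁻¹ = (i : G) ∧ (a * b)⁻¹ * (a * b) = (k : G)
        then c * d else 0)
    = ∑ j : unitSpace G, (if a * a⁻¹ = (i : G) ∧ a⁻¹ * a = (j : G) then c else 0) *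
        (if b * b⁻¹ = (j : G) ∧ b⁻¹ * b = (k : G) then d else 0) := by
  by_cases ha : a = 0
  · subst ha
    rw [if_neg (fun h => h.1 (zero_mul' b))]
    symm
    refine Finset.sum_eq_zero fun j _ => ?_
    rw [if_neg, zero_mul]
    rintro ⟨h1, -⟩
    exact i.2.1 (h1.symm.trans zero_mul_zero_inv)
  by_cases hb : b = 0
  · subst hb
    rw [if_neg (fun h => h.1 (mul_zero' a))]
    symm
    refine Finset.sum_eq_zero fun j _ => ?_
    have h2 : (if (0:G) * (0:G)⁻¹ = (j : G) ∧ (0:G)⁻¹ * 0 = (k : G) then d else 0) = 0 :=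
      if_neg (fun h => j.2.1 (h.1.symm.trans zero_mul_zero_inv))
    rw [h2, mul_zero]
  by_cases hab : a * b ≠ 0
  · have hsr : a⁻¹ * a = b * b⁻¹ := (mul_ne_zero_iff' a b ha hb).mp hab
    have hr := range_mul ha hb hab
    have hs := source_mul ha hb hab
    rw [hr, hs]
    set j₀ : unitSpace G := ⟨a⁻¹ * a, source_unit ha⟩ with hj₀
    have e1 : a⁻¹ * a = (j₀ : G) := rfl
    have e2 : b * b⁻¹ = (j₀ : G) := hsr.symm
    rw [Finset.sum_eq_single_of_mem j₀ (Finset.mem_univ _)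
      (fun j _ hj => by
        rw [if_neg, zero_mul]
        rintro ⟨-, h2⟩
        exact hj (Subtype.ext (h2.symm.trans e1)))]
    split_ifs <;> first | rfl | (exfalso; tauto) | simp
  · rw [if_neg (fun h => hab h.1)]
    have hne : a⁻¹ * a ≠ b * b⁻¹ := fun h => hab ((mul_ne_zero_iff' a b ha hb).mpr h)
    symm
    refine Finset.sum_eq_zero fun j _ => ?_
    split_ifs with h1 h2 <;>
      first | (exact absurd (h1.2.trans h2.1.symm) hne) | simp

lemma Tmat_mul (f g : G →₀ ℂ) : Tmat (convF f g) = Tmat f * Tmat g := by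
  ext i k
  rw [Tmat_eq_Tent, Matrix.mul_apply, convF, map_finsuppSum, Finsupp.sum]
  calc
    ∑ a ∈ f.support, Tent i k ((Finsupp.sum g fun b cb =>
        if a * b ≠ 0 then Finsupp.single (a * b) (f a * cb) else 0))
      = ∑ a ∈ f.support, ∑ b ∈ g.support, ∑ j : unitSpace G,
          (if a * a⁻¹ = (i : G) ∧ a⁻¹ * a = (j : G) then f a else 0) *
          (if b * b⁻¹ = (j : G) ∧ b⁻¹ * b = (k : G) then g b else 0) := by
        refine Finset.sum_congr rfl fun a _ => ?_
        rw [map_finsuppSum, Finsupp.sum]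
        refine Finset.sum_congr rfl fun b _ => ?_
        rw [← key i k a b (f a) (g b)]
        by_cases h : a * b ≠ 0
        · rw [if_pos h, Tent_single]
          simp [h]
        · rw [if_neg h, map_zero, if_neg (fun hc => h hc.1)]
    _ = ∑ j : unitSpace G, Tmat f i j * Tmat g j k := by
        symm
        calc
          ∑ j : unitSpace G, Tmat f i j * Tmat g j k
            = ∑ j : unitSpace G, ∑ a ∈ f.support, ∑ b ∈ g.support,
                (if a * a⁻¹ = (i : G) ∧ a⁻¹ * a = (j : G) then f a else 0) *
                (if b * b⁻¹ = (j : G) ∧ b⁻¹ * b = (k : G) then g b else 0) := by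
              refine Finset.sum_congr rfl fun j _ => ?_
              exact Finset.sum_mul_sum _ _ _ _
          _ = ∑ a ∈ f.support, ∑ j : unitSpace G, ∑ b ∈ g.support, _ := Finset.sum_comm
          _ = ∑ a ∈ f.support, ∑ b ∈ g.support, ∑ j : unitSpace G,
                (if a * a⁻¹ = (i : G) ∧ a⁻¹ * a = (j : G) then f a else 0) *
                (if b * b⁻¹ = (j : G) ∧ b⁻¹ * b = (k : G) then g b else 0) :=
              Finset.sum_congr rfl fun a _ => Finset.sum_comm

end GZ

section NormFacts
open scoped Matrix.Norms.L2Operator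
open Matrix

lemma euclid_coord_le_norm {n : Type*} [Fintype n] (w : EuclideanSpace ℂ n) (i : n) :
    ‖w i‖ ≤ ‖w‖ := by
  rw [EuclideanSpace.norm_eq]
  calc ‖w i‖ = Real.sqrt (‖w i‖^2) := (Real.sqrt_sq (norm_nonneg _)).symm
    _ ≤ _ := Real.sqrt_le_sqrt (Finset.single_le_sum (f := fun k => ‖w k‖^2)
        (fun k _ => sq_nonneg _) (Finset.mem_univ i))

lemma matrix_entry_le_l2_opNorm {n : Type*} [Fintype n] [DecidableEq n]
    (A : Matrix n n ℂ) (i j : n) : ‖A i j‖ ≤ ‖A‖ := by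
  have hv : ‖(EuclideanSpace.single j (1:ℂ) : EuclideanSpace ℂ n)‖ = 1 := by
    rw [EuclideanSpace.norm_single, norm_one]
  have h := Matrix.l2_opNorm_mulVec A (EuclideanSpace.single j (1:ℂ))
  rw [hv, mul_one] at h
  have he : ((EuclideanSpace.equiv n ℂ).symm
      (A *ᵥ (EuclideanSpace.single j (1:ℂ) : EuclideanSpace ℂ n))) i = A i j := by
    simp [Matrix.mulVec, dotProduct, EuclideanSpace.single_apply, mul_ite]
  calc ‖A i j‖ = ‖((EuclideanSpace.equiv n ℂ).symm
        (A *ᵥ (EuclideanSpace.single j (1:ℂ) : EuclideanSpace ℂ n))) i‖ := by rw [he]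
    _ ≤ ‖(EuclideanSpace.equiv n ℂ).symm
        (A *ᵥ (EuclideanSpace.single j (1:ℂ) : EuclideanSpace ℂ n))‖ :=
          euclid_coord_le_norm _ i
    _ ≤ ‖A‖ := h

end NormFacts

namespace GZ
variable {G : Type*} [GroupoidZ G]
open GroupoidZ
open scoped Matrix.Norms.L2Operator

variable [Fintype (unitSpace G)]

lemma isCstarSeminorm_M : IsCstarSeminorm (fun f : G →₀ ℂ => ‖Tmat f‖) := by
  refine ⟨fun f => norm_nonneg _, fun f g => ?_, fun c f => ?_, fun f g => ?_, fun f => ?_⟩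
  · show ‖Tmat (f + g)‖ ≤ ‖Tmat f‖ + ‖Tmat g‖
    rw [Tmat_add]; exact norm_add_le _ _
  · show ‖Tmat (c • f)‖ = ‖c‖ * ‖Tmat f‖
    rw [Tmat_smul]; exact norm_smul c (Tmat f)
  · show ‖Tmat (convF f g)‖ ≤ ‖Tmat f‖ * ‖Tmat g‖
    rw [Tmat_mul]; exact norm_mul_le _ _
  · show ‖Tmat (convF (starFsupp f) f)‖ = ‖Tmat f‖ ^ 2
    rw [Tmat_mul, Tmat_star, Matrix.l2_opNorm_conjTranspose_mul_self, sq]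

/-- The row-sum functional. -/
noncomputable def rowL (u : unitSpace G) : (G →₀ ℂ) →ₗ[ℂ] ℂ :=
  ∑ j : unitSpace G, Tent u j

lemma rowL_apply (u : unitSpace G) (f : G →₀ ℂ) :
    rowL u f = ∑ j : unitSpace G, Tent u j f := by
  rw [rowL, LinearMap.sum_apply]

lemma rowL_le (u : unitSpace G) (f : G →₀ ℂ) :
    ‖rowL u f‖ ≤ (Fintype.card (unitSpace G) : ℝ) * ‖Tmat f‖ := by
  rw [rowL_apply]
  calc ‖∑ j : unitSpace G, Tent u j f‖ ≤ ∑ j : unitSpace G, ‖Tent u j f‖ :=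
        norm_sum_le _ _
    _ ≤ ∑ _j : unitSpace G, ‖Tmat f‖ := by
        refine Finset.sum_le_sum fun j _ => ?_
        rw [← Tmat_eq_Tent]
        exact matrix_entry_le_l2_opNorm (Tmat f) u j
    _ = (Fintype.card (unitSpace G) : ℝ) * ‖Tmat f‖ := by
        rw [Finset.sum_const, Finset.card_univ, nsmul_eq_mul]

lemma rowL_generator (u : unitSpace G) (B : Finset G) (hB : IsBisection (B : Set G))
    (hF : IsFull (B : Set G)) :
    rowL u (∑ γ ∈ B, Finsupp.single γ (1 : ℂ)) = 1 := by
  rw [rowL_apply]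
  calc ∑ j : unitSpace G, Tent u j (∑ γ ∈ B, Finsupp.single γ (1 : ℂ))
      = ∑ j : unitSpace G, ∑ γ ∈ B,
          (if γ * γ⁻¹ = (u : G) ∧ γ⁻¹ * γ = (j : G) then (1:ℂ) else 0) := by
        refine Finset.sum_congr rfl fun j _ => ?_
        rw [map_sum]
        exact Finset.sum_congr rfl fun γ _ => Tent_single u j γ 1
    _ = ∑ γ ∈ B, ∑ j : unitSpace G,
          (if γ * γ⁻¹ = (u : G) ∧ γ⁻¹ * γ = (j : G) then (1:ℂ) else 0) := Finset.sum_comm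
    _ = ∑ γ ∈ B, (if γ * γ⁻¹ = (u : G) then (1:ℂ) else 0) := by
        refine Finset.sum_congr rfl fun γ hγ => ?_
        have hγ0 : γ ≠ 0 := fun h => hB.1 (Finset.mem_coe.mpr (h ▸ hγ))
        rw [Finset.sum_eq_single_of_mem (⟨γ⁻¹ * γ, source_unit hγ0⟩ : unitSpace G)
          (Finset.mem_univ _)
          (fun j _ hj => if_neg (fun hc => hj (Subtype.ext hc.2.symm)))]
        exact if_congr (and_iff_left rfl) rfl rfl
    _ = 1 := by
        have hu : (u : G) ∈ (fun a => a * a⁻¹) '' (B : Set G) := by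
          rw [hF.1]; exact u.2
        obtain ⟨γ₀, hγ₀B, hγ₀⟩ := hu
        rw [Finset.sum_eq_single_of_mem γ₀ (Finset.mem_coe.mp hγ₀B)
          (fun γ hγ hne => if_neg (fun hc => hne
            (hB.2.1 γ (Finset.mem_coe.mpr hγ) γ₀ hγ₀B (hc.trans hγ₀.symm))))]
        exact if_pos hγ₀


lemma rowL_le_N (u : unitSpace G) {N : (G →₀ ℂ) → ℝ}
    (h : ∀ f : G →₀ ℂ, ‖Tmat f‖ ≤ N f) (f : G →₀ ℂ) :
    ‖rowL u f‖ ≤ (Fintype.card (unitSpace G) : ℝ) * N f :=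
  le_trans (rowL_le u f) (mul_le_mul_of_nonneg_left (h f) (Nat.cast_nonneg _))

end GZ

/-- Let `G` be a discrete groupoid with finite unit space and let `N` be
the full C*-norm on `C_c(G)` (the maximal C*-seminorm).  The closure of `π(ℂF(G))` in the
full groupoid C*-algebra is all of `C*(G)` — i.e. `π(ℂF(G))` is `N`-dense in `C_c(G)` —
iff `G` is a group (the unit space is a singleton). -/
theorem closure_rep_eq_full_iff_group {G : Type*} [GroupoidZ G] [Fintype (unitSpace G)]
    (hne : ∃ e : G, e ∈ unitSpace G)
    (N : (G →₀ ℂ) → ℝ) (hN : IsCstarSeminorm N)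
    (hmax : ∀ M : (G →₀ ℂ) → ℝ, IsCstarSeminorm M → ∀ f, M f ≤ N f) :
    (∀ f : G →₀ ℂ, f 0 = 0 → ∀ ε > (0 : ℝ), ∃ φ ∈ spanFullD G, N (f - φ) < ε) ↔
      ∃ e : G, unitSpace G = {e} := by
  constructor
  · -- density implies the unit space is a singleton
    intro hdens
    by_contra hns
    push_neg at hns
    obtain ⟨e₁, he₁⟩ := hne
    obtain ⟨e₂, he₂, hne₂⟩ := Set.exists_of_ssubset
      (HasSubset.Subset.ssubset_of_ne (Set.singleton_subset_iff.mpr he₁) (Ne.symm (hns e₁)))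
    have he₂e₁ : e₂ ≠ e₁ := fun h => hne₂ (h ▸ rfl)
    set u₁ : unitSpace G := ⟨e₁, he₁⟩ with hu₁
    set u₂ : unitSpace G := ⟨e₂, he₂⟩ with hu₂
    set L : (G →₀ ℂ) →ₗ[ℂ] ℂ := GZ.rowL u₁ - GZ.rowL u₂ with hLdef
    have hker : spanFullD G ≤ LinearMap.ker L := by
      rw [spanFullD, Submodule.span_le]
      rintro f ⟨B, hB, hF, rfl⟩
      simp only [SetLike.mem_coe, LinearMap.mem_ker, hLdef, LinearMap.sub_apply]
      rw [GZ.rowL_generator u₁ B hB hF, GZ.rowL_generator u₂ B hB hF, sub_self]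
    set f : G →₀ ℂ := Finsupp.single e₁ 1 with hfdef
    have hf0 : f 0 = 0 := by rw [hfdef]; exact Finsupp.single_eq_of_ne he₁.1.symm
    have hrow : ∀ u : unitSpace G, GZ.rowL u f = if e₁ = (u : G) then 1 else 0 := by
      intro u
      rw [GZ.rowL_apply]
      calc ∑ j : unitSpace G, GZ.Tent u j f
          = ∑ j : unitSpace G, if e₁ = (u : G) ∧ e₁ = (j : G) then (1:ℂ) else 0 := by
            refine Finset.sum_congr rfl fun j _ => ?_
            rw [hfdef, GZ.Tent_single, GZ.unit_mul_inv he₁, GZ.unit_inv_mul he₁]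
        _ = if e₁ = (u : G) then 1 else 0 := by
            by_cases h : e₁ = (u : G)
            · rw [if_pos h,
                Finset.sum_eq_single_of_mem u₁ (Finset.mem_univ _)
                  (fun j _ hj => if_neg (fun hc => hj (Subtype.ext hc.2.symm))),
                if_pos ⟨h, rfl⟩]
            · rw [if_neg h]
              exact Finset.sum_eq_zero fun j _ => if_neg (fun hc => h hc.1)
    have hLf : L f = 1 := by
      rw [hLdef, LinearMap.sub_apply, hrow u₁, hrow u₂, if_pos rfl,
        if_neg (fun h => he₂e₁ h.symm), sub_zero]
    set n : ℝ := (Fintype.card (unitSpace G) : ℝ) with hn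
    have hn0 : 0 ≤ n := Nat.cast_nonneg _
    have hC : (0:ℝ) < 2 * n + 1 := by positivity
    obtain ⟨φ, hφmem, hφ⟩ := hdens f hf0 (1 / (2 * n + 1)) (by positivity)
    have hLφ : L φ = 0 := hker hφmem
    have h1 : L (f - φ) = 1 := by rw [map_sub, hLφ, hLf, sub_zero]
    have hMN := hmax _ GZ.isCstarSeminorm_M
    have hb1 := GZ.rowL_le_N u₁ hMN (f - φ)
    have hb2 := GZ.rowL_le_N u₂ hMN (f - φ)
    have habs : ‖L (f - φ)‖ ≤ 2 * n * N (f - φ) := by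
      rw [hLdef, LinearMap.sub_apply]
      calc ‖GZ.rowL u₁ (f - φ) - GZ.rowL u₂ (f - φ)‖
          ≤ ‖GZ.rowL u₁ (f - φ)‖ + ‖GZ.rowL u₂ (f - φ)‖ := norm_sub_le _ _
        _ ≤ n * N (f - φ) + n * N (f - φ) := add_le_add hb1 hb2
        _ = 2 * n * N (f - φ) := by ring
    rw [h1, norm_one] at habs
    have h2 : (1:ℝ) ≤ (2 * n + 1) * N (f - φ) := by nlinarith [hN.1 (f - φ)]
    have h3 : (2 * n + 1) * N (f - φ) < (2 * n + 1) * (1 / (2 * n + 1)) :=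
      mul_lt_mul_of_pos_left hφ hC
    rw [mul_one_div, div_self (ne_of_gt hC)] at h3
    linarith
  · -- a group: everything supported away from `0` is a combination of full bisections
    rintro ⟨e, he⟩ f hf0 ε hε
    refine ⟨f, ?_, ?_⟩
    · have hf : f = ∑ γ ∈ f.support, Finsupp.single γ (f γ) := (Finsupp.sum_single f).symm
      rw [hf]
      refine Submodule.sum_mem _ fun γ hγ => ?_
      have hγ0 : γ ≠ 0 := fun h => Finsupp.mem_support_iff.mp hγ (h ▸ hf0)
      have hsingle : Finsupp.single γ (f γ) = (f γ) • Finsupp.single γ (1:ℂ) := by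
        rw [Finsupp.smul_single, smul_eq_mul, mul_one]
      rw [hsingle]
      refine Submodule.smul_mem _ _ (Submodule.subset_span ?_)
      refine ⟨{γ}, ⟨?_, ?_, ?_⟩, ?_, (Finset.sum_singleton _ _).symm⟩
      · rw [Finset.coe_singleton]
        exact fun h => hγ0 (Set.mem_singleton_iff.mp h).symm
      · intro a ha b hb _
        rw [Finset.coe_singleton, Set.mem_singleton_iff] at ha hb
        rw [ha, hb]
      · intro a ha b hb _
        rw [Finset.coe_singleton, Set.mem_singleton_iff] at ha hb
        rw [ha, hb]
      · have hr : γ * γ⁻¹ = e := by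
          have h := GZ.range_unit hγ0
          rw [he] at h
          exact Set.mem_singleton_iff.mp h
        have hs : γ⁻¹ * γ = e := by
          have h := GZ.source_unit hγ0
          rw [he] at h
          exact Set.mem_singleton_iff.mp h
        constructor
        · rw [Finset.coe_singleton, Set.image_singleton, hr, he]
        · rw [Finset.coe_singleton, Set.image_singleton, hs, he]
    · have hN0 : N 0 = 0 := by
        have h := hN.2.2.1 0 0
        rwa [zero_smul, norm_zero, zero_mul] at h
      rw [sub_self, hN0]
      exact hε
end
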